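/- arXiv:1701.06558 — 8 statements merged into one kernel-verified Lean document; each statement's English description precedes it below -/
import Mathlib

section
/- Let n ≥ 3 be an integer, λ = 4(1 - 1/(n-1)²), and A a complex number with A ≠ 0 and A ≠ 1. Then the polynomial ψ(t) = λ(t^{n-1} - A)² - 4(t^{n-2} - A)(t^n - A) has no multiple roots, i.e., ψ and ψ' have no common zero. -/
/-!
Put `k = n - 1` and `p = t^(n-2)`, so that `t^(n-1) = p t` and `t^n = p t²`; then `ψ(t)` and
`t ψ'(t)` are polynomials in `k, λ, A, p, t`. Since `k² λ = 4 (k² - 1)`, the combination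
`k (2k ψ - t ψ')` is `4A (p L(t) - 2A)` with `L(t) = k(k-1)t² - 2(k²-1)t + k(k+1)`, so at a
multiple root `2A = p L(t)`. On that locus `ψ = (k² - 1) p² (t - 1)⁴`, which forces `t = 1`, and
then `A = p = 1`.
-/

theorem eq_one_and_eq_of_multiple_root {K : Type*} [Field K] [NeZero (2 : K)] {k lam A p t : K}
    (hk : k ≠ 0) (hk1 : k ^ 2 ≠ 1) (hA : A ≠ 0) (hlam : k ^ 2 * lam = 4 * (k ^ 2 - 1))
    (hψ : lam * (p * t - A) ^ 2 - 4 * (p - A) * (p * t ^ 2 - A) = 0)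
    (hψ' : 2 * lam * k * (p * t - A) * p * t - 4 * (k - 1) * p * (p * t ^ 2 - A)
      - 4 * (k + 1) * (p - A) * p * t ^ 2 = 0) :
    t = 1 ∧ p = A := by
  have hlin : 2 * A = p * (k * (k - 1) * t ^ 2 - 2 * (k ^ 2 - 1) * t + k * (k + 1)) := by
    have h : 4 * A * (2 * A - p * (k * (k - 1) * t ^ 2 - 2 * (k ^ 2 - 1) * t + k * (k + 1))) = 0 := by
      linear_combination (-2 * k ^ 2) * hψ + k * hψ' - 2 * A * (p * t - A) * hlam
    have h4 : (4 : K) ≠ 0 := by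
      rw [show (4 : K) = 2 ^ 2 by norm_num]
      exact pow_ne_zero 2 two_ne_zero
    exact sub_eq_zero.mp ((mul_eq_zero.mp h).resolve_left (mul_ne_zero h4 hA))
  have hquartic : k ^ 2 * (k ^ 2 - 1) * p ^ 2 * (t - 1) ^ 4 = 0 := by
    linear_combination k ^ 2 * hψ - (p * t - A) ^ 2 * hlam
      - (p * (k * (k + 1) * t ^ 2 - 2 * (k ^ 2 - 1) * t + k * (k - 1)) - 2 * A) * hlin
  have hp : p ≠ 0 := by
    rintro rfl
    exact hA (by simpa [two_ne_zero] using hlin)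
  have ht : t = 1 := by
    simpa [hk, sub_eq_zero, hk1, hp] using hquartic
  subst ht
  exact ⟨rfl, mul_left_cancel₀ two_ne_zero (by linear_combination -hlin)⟩

theorem hasDerivAt_psi {𝕜 : Type*} [NontriviallyNormedField 𝕜] (lam A t : 𝕜) (j : ℕ) :
    HasDerivAt (fun s => lam * (s ^ (j + 2) - A) ^ 2 - 4 * (s ^ (j + 1) - A) * (s ^ (j + 3) - A))
      (2 * lam * (j + 2) * (t ^ (j + 2) - A) * t ^ (j + 1) - 4 * (j + 1) * t ^ j * (t ^ (j + 3) - A)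
        - 4 * (j + 3) * (t ^ (j + 1) - A) * t ^ (j + 2)) t := by
  refine (((((hasDerivAt_pow (j + 2) t).sub_const A).pow 2).const_mul lam).sub
      ((((hasDerivAt_pow (j + 1) t).sub_const A).const_mul 4).mul
        ((hasDerivAt_pow (j + 3) t).sub_const A))).congr_deriv ?_
  simp only [Nat.add_sub_cancel, Nat.add_succ_sub_one]
  push_cast
  ring

theorem stmt_0 (n : ℕ) (hn : 3 ≤ n) (A : ℂ) (hA0 : A ≠ 0) (hA1 : A ≠ 1)
    (lam : ℂ) (hlam : lam = 4 * (1 - 1 / ((n : ℂ) - 1) ^ 2))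
    (ψ : ℂ → ℂ)
    (hψ : ψ = fun t => lam * (t ^ (n - 1) - A) ^ 2 - 4 * (t ^ (n - 2) - A) * (t ^ n - A)) :
    ¬ ∃ t₀ : ℂ, ψ t₀ = 0 ∧ deriv ψ t₀ = 0 := by
  rintro ⟨t, hψt, hψ't⟩
  obtain ⟨j, rfl⟩ : ∃ j, n = j + 3 := ⟨n - 3, by omega⟩
  subst hψ
  simp only [show j + 3 - 1 = j + 2 from rfl, show j + 3 - 2 = j + 1 from rfl] at hψt hψ't
  rw [(hasDerivAt_psi lam A t j).deriv] at hψ't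
  have hk : ((j : ℂ) + 2) ≠ 0 := by exact_mod_cast (j + 1).succ_ne_zero
  have hk1 : ((j : ℂ) + 2) ^ 2 ≠ 1 := by
    exact_mod_cast (Nat.one_lt_pow two_ne_zero (by omega : 1 < j + 2)).ne'
  have hlam' : ((j : ℂ) + 2) ^ 2 * lam = 4 * (((j : ℂ) + 2) ^ 2 - 1) := by
    rw [hlam, show ((j + 3 : ℕ) : ℂ) - 1 = j + 2 by push_cast; ring]
    field_simp
  obtain ⟨rfl, hA⟩ := eq_one_and_eq_of_multiple_root (p := t ^ (j + 1)) (t := t) hk hk1 hA0 hlam'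
    (by linear_combination hψt) (by linear_combination t * hψ't)
  exact hA1 (by simpa using hA.symm)
end

section
/- Let n ≥ 3 and λ = 4(1 - 1/(n-1)²). Then t = 1 is a zero of multiplicity exactly 4 of the polynomial ψ(t) = λ(t^{n-1} - 1)² - 4(t^{n-2} - 1)(t^n - 1). -/
/-!
Multiplicities of roots at `1` are read off from the iterated derivatives at `1`. Writing
`n = j + 2` and expanding, `ψ` is a combination of the monomials `X ^ (2j+2)`, `X ^ (j+1)`,
`X ^ j`, `X ^ (j+2)` and a constant, so its `k`-th derivative at `1` is the same combination of
falling factorials. The value at `1` and the first derivative vanish for every `λ`, the second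
equals `2 (j + 1)² λ - 8 j (j + 2)`, so the given `λ` is exactly the one killing it; with this `λ`
the third derivative vanishes too, while the fourth equals `-8 j (j + 2) ≠ 0`.
-/

open Polynomial

namespace Polynomial

variable {R : Type*} [CommRing R]

theorem X_sub_C_pow_dvd_and_not_dvd_of_iterate_derivative [NoZeroDivisors R] [CharZero R]
    {p : R[X]} {t : R} {k : ℕ} (hroot : ∀ m < k, (derivative^[m] p).IsRoot t)
    (hk : ¬ (derivative^[k] p).IsRoot t) :
    (X - C t) ^ k ∣ p ∧ ¬ (X - C t) ^ (k + 1) ∣ p := by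
  have hp : p ≠ 0 := by rintro rfl; simp at hk
  refine ⟨?_, fun hdvd => hk ?_⟩
  · cases k with
    | zero => exact one_dvd p
    | succ k =>
      exact (le_rootMultiplicity_iff hp).1 <|
        lt_rootMultiplicity_of_isRoot_iterate_derivative hp fun m hm => hroot m (by omega)
  · simpa [dvd_iff_isRoot] using pow_sub_dvd_iterate_derivative_of_pow_dvd k hdvd

theorem eval_one_iterate_derivative_C_mul_X_pow (c : R) (a k : ℕ) :
    (derivative^[k] (C c * X ^ a)).eval 1 = c * (descPochhammer R k).eval (a : R) := by
  simp [iterate_derivative_C_mul, iterate_derivative_X_pow_eq_C_mul,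
    descPochhammer_eval_eq_descFactorial]

theorem eval_one_iterate_derivative_sq_sub_mul (lam : R) (j : ℕ) {k : ℕ} (hk : k ≠ 0) :
    (derivative^[k] (C lam * (X ^ (j + 1) - 1) ^ 2 - 4 * (X ^ j - 1) * (X ^ (j + 2) - 1))).eval 1 =
      (lam - 4) * (descPochhammer R k).eval (2 * j + 2 : R)
        - 2 * lam * (descPochhammer R k).eval (j + 1 : R)
        + 4 * (descPochhammer R k).eval (j : R) + 4 * (descPochhammer R k).eval (j + 2 : R) := by
  have hexpand : C lam * (X ^ (j + 1) - 1) ^ 2 - 4 * (X ^ j - 1) * (X ^ (j + 2) - 1) =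
      C (lam - 4) * X ^ (2 * j + 2) + C (-2 * lam) * X ^ (j + 1) + C 4 * X ^ j
        + C 4 * X ^ (j + 2) + C (lam - 4) := by
    simp only [map_sub, map_neg, map_mul, map_ofNat]
    ring
  simp only [hexpand, iterate_map_add, eval_add, eval_one_iterate_derivative_C_mul_X_pow,
    iterate_derivative_C (Nat.pos_of_ne_zero hk), eval_zero]
  push_cast
  ring

end Polynomial

theorem stmt_2 (n : ℕ) (hn : 3 ≤ n)
    (lam : ℂ) (hlam : lam = 4 * (1 - 1 / ((n : ℂ) - 1) ^ 2))
    (ψ : Polynomial ℂ)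
    (hψ : ψ = C lam * (X ^ (n - 1) - 1) ^ 2 - 4 * (X ^ (n - 2) - 1) * (X ^ n - 1)) :
    (X - C 1) ^ 4 ∣ ψ ∧ ¬ (X - C 1) ^ 5 ∣ ψ := by
  obtain ⟨j, rfl⟩ : ∃ j, n = j + 2 := ⟨n - 2, by omega⟩
  rw [show j + 2 - 1 = j + 1 by omega, show j + 2 - 2 = j by omega] at hψ
  have hj : (j : ℂ) ≠ 0 := by exact_mod_cast (by omega : j ≠ 0)
  have hj2 : (j : ℂ) + 2 ≠ 0 := by exact_mod_cast (j + 1).succ_ne_zero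
  have hlam' : lam = 4 - 4 / ((j : ℂ) + 1) ^ 2 := by rw [hlam]; push_cast; ring
  have hD4 : (derivative^[4] ψ).eval 1 = -8 * j * (j + 2) := by
    rw [hψ, eval_one_iterate_derivative_sq_sub_mul _ _ (by norm_num), hlam']
    simp only [descPochhammer_succ_eval, descPochhammer_zero, eval_one]
    field_simp
    ring
  refine X_sub_C_pow_dvd_and_not_dvd_of_iterate_derivative (k := 4) (fun m hm => ?_) ?_
  · interval_cases m
    · simp [hψ, hlam']
    all_goals
      rw [IsRoot.def, hψ, eval_one_iterate_derivative_sq_sub_mul _ _ (by norm_num), hlam']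
      simp only [descPochhammer_succ_eval, descPochhammer_zero, eval_one]
      field_simp
      ring
  · rw [IsRoot.def, hD4]
    simp [hj, hj2]
end

section
/- Let n ≥ 3 and λ = 4(1 - 1/(n-1)²), and let ψ(t) = λ(t^{n-1} - 1)² - 4(t^{n-2} - 1)(t^n - 1). Then every zero of ψ other than t = 1 is a simple zero. -/
/-!
With `m = n - 1`, the identity `(t^(m-1) - 1)(t^(m+1) - 1) = (t^m - 1)^2 - t^(m-1) (t - 1)^2` shows that
`ψ = (4 / m^2) φ` with `φ t = m^2 t^(m-1) (t - 1)^2 - (t^m - 1)^2`. At a double zero `t ≠ 0` of `φ`,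
the equation `t φ' t = 0` is linear in `t^m`; substituting it into `φ t = 0` eliminates `t^m`
and leaves `m^2 (m^2 - 1) (t - 1)^4 = 0`, so `t = 1`.
-/

section Algebra

variable {R : Type*} [CommRing R]

/-- `φ` with `m = k + 2`, so that no natural subtraction occurs in the exponents. -/
def reducedPsi (k : ℕ) (t : R) : R :=
  ((k : R) + 2) ^ 2 * t ^ (k + 1) * (t - 1) ^ 2 - (t ^ (k + 2) - 1) ^ 2

def reducedPsiDeriv (k : ℕ) (t : R) : R :=
  ((k : R) + 2) ^ 2 * ((k + 1) * t ^ k) * (t - 1) ^ 2 + ((k : R) + 2) ^ 2 * t ^ (k + 1) * (2 * (t - 1))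
    - 2 * (t ^ (k + 2) - 1) * ((k + 2) * t ^ (k + 1))

theorem reducedPsi_zero (k : ℕ) : reducedPsi k (0 : R) = -1 := by
  simp [reducedPsi]

theorem eq_one_of_reducedPsi_eq_zero_of_reducedPsiDeriv_eq_zero [IsDomain R] [CharZero R]
    {k : ℕ} {t : R} (h : reducedPsi k t = 0) (h' : reducedPsiDeriv k t = 0) : t = 1 := by
  have ht : t ≠ 0 := by
    rintro rfl
    simp [reducedPsi_zero] at h
  have hk1 : (k : R) + 1 ≠ 0 := by exact_mod_cast Nat.succ_ne_zero k
  have hk2 : (k : R) + 2 ≠ 0 := by exact_mod_cast Nat.succ_ne_zero (k + 1)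
  have hk3 : (k : R) + 3 ≠ 0 := by exact_mod_cast Nat.succ_ne_zero (k + 2)
  have hlin : ((k : R) + 2) * (t - 1) * ((k + 3) * t - (k + 1)) = 2 * t * (t ^ (k + 2) - 1) := by
    -- `t φ' t` factors as `(k + 2) t^(k + 1)` times the difference of the two sides
    have : t ^ (k + 1) * ((k + 2) * (((k : R) + 2) * (t - 1) * ((k + 3) * t - (k + 1))
        - 2 * t * (t ^ (k + 2) - 1))) = 0 := by
      unfold reducedPsiDeriv at h'
      linear_combination t * h'
    simpa [ht, hk2, sub_eq_zero] using this
  have key : ((k : R) + 2) ^ 2 * ((k + 1) * (k + 3)) * (t - 1) ^ 4 = 0 := by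
    unfold reducedPsi at h
    linear_combination 4 * t ^ 2 * h +
      (2 * ((k : R) + 2) ^ 2 * (t - 1) ^ 2 - 2 * t * (t ^ (k + 2) - 1)
        - (k + 2) * (t - 1) * ((k + 3) * t - (k + 1))) * hlin
  simpa [hk1, hk2, hk3, sub_eq_zero] using key

end Algebra

theorem psi_eq_div_mul_reducedPsi {K : Type*} [Field K] (k : ℕ) (t : K) (hk : (k : K) + 2 ≠ 0) :
    4 * (1 - 1 / ((k : K) + 2) ^ 2) * (t ^ (k + 2) - 1) ^ 2 - 4 * (t ^ (k + 1) - 1) * (t ^ (k + 3) - 1)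
      = 4 / ((k : K) + 2) ^ 2 * reducedPsi k t := by
  rw [reducedPsi]
  field_simp
  ring

theorem hasDerivAt_reducedPsi {𝕜 : Type*} [NontriviallyNormedField 𝕜] (k : ℕ) (t : 𝕜) :
    HasDerivAt (reducedPsi k) (reducedPsiDeriv k t) t := by
  have hpow (j : ℕ) : HasDerivAt (fun x : 𝕜 => x ^ (j + 1)) (((j : 𝕜) + 1) * t ^ j) t := by
    simpa using hasDerivAt_pow (j + 1) t
  have hsq : HasDerivAt (fun x : 𝕜 => (x - 1) ^ 2) (2 * (t - 1)) t := by
    simpa using ((hasDerivAt_id t).sub_const 1).fun_pow 2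
  refine ((((hpow k).const_mul (((k : 𝕜) + 2) ^ 2)).fun_mul hsq).fun_sub
    (((hpow (k + 1)).sub_const 1).fun_pow 2)).congr_deriv ?_
  simp only [reducedPsiDeriv]
  push_cast
  ring

theorem stmt_3 (n : ℕ) (hn : 3 ≤ n)
    (lam : ℂ) (hlam : lam = 4 * (1 - 1 / ((n : ℂ) - 1) ^ 2))
    (ψ : ℂ → ℂ)
    (hψ : ψ = fun t => lam * (t ^ (n - 1) - 1) ^ 2 - 4 * (t ^ (n - 2) - 1) * (t ^ n - 1))
    (t₀ : ℂ) (ht₀ : t₀ ≠ 1) (h : ψ t₀ = 0) :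
    deriv ψ t₀ ≠ 0 := by
  obtain ⟨k, rfl⟩ : ∃ k, n = k + 3 := ⟨n - 3, by omega⟩
  have hk : (k : ℂ) + 2 ≠ 0 := by exact_mod_cast Nat.succ_ne_zero (k + 1)
  have hc : 4 / ((k : ℂ) + 2) ^ 2 ≠ 0 := by simp [hk]
  have hψ' : ψ = fun t => 4 / ((k : ℂ) + 2) ^ 2 * reducedPsi k t := by
    have hm : ((k + 3 : ℕ) : ℂ) - 1 = k + 2 := by push_cast; ring
    rw [hψ, hlam, hm]
    funext t
    exact psi_eq_div_mul_reducedPsi k t hk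
  subst hψ'
  rw [((hasDerivAt_reducedPsi k t₀).const_mul _).deriv]
  rw [mul_eq_zero, or_iff_right hc] at h
  exact mul_ne_zero hc fun h' => ht₀ (eq_one_of_reducedPsi_eq_zero_of_reducedPsiDeriv_eq_zero h h')
end

section
/- Let m, n be positive integers and a, b ∈ ℂ with a ≠ b. Let Q(z) = Σ_{i=0}^{m} Σ_{j=0}^{n} C(m,i)·C(n,j)·((-1)^{i+j}/(n+m+1-i-j))·z^{n+m+1-i-j}·a^j·b^i and P(z) = Q(z) + c. Then P(a) ≠ P(b), i.e., P is injective on the set {a, b} of distinct critical points of P. -/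
/-!
Termwise differentiation and the binomial theorem give `Q' z = (z - b)^m (z - a)^n`. Integrating
`Q'` along the segment `b + t (a - b)`, `t ∈ [0, 1]`, gives
`Q a - Q b = (a - b)^(m+n+1) ∫₀¹ t^m (t - 1)^n dt`, and the integral is `±` a Beta integral,
hence nonzero.
-/

open Finset

theorem sub_pow_mul_sub_pow_eq_sum {R : Type*} [CommRing R] (m n : ℕ) (a b z : R) :
    (z - b) ^ m * (z - a) ^ n =
      ∑ i ∈ range (m + 1), ∑ j ∈ range (n + 1),
        (m.choose i : R) * (n.choose j : R) * (-1) ^ (i + j) *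
          z ^ ((m - i) + (n - j)) * a ^ j * b ^ i := by
  rw [sub_eq_neg_add z b, sub_eq_neg_add z a, add_pow, add_pow, sum_mul_sum]
  refine sum_congr rfl fun i _ => sum_congr rfl fun j _ => ?_
  rw [neg_pow b, neg_pow a, pow_add (-1 : R), pow_add z]
  ring

theorem hasDerivAt_sum_choose_pow_div {𝕜 : Type*} [NontriviallyNormedField 𝕜] [CharZero 𝕜]
    (m n : ℕ) (a b z : 𝕜) :
    HasDerivAt (fun z => ∑ i ∈ range (m + 1), ∑ j ∈ range (n + 1),
        (m.choose i : 𝕜) * (n.choose j : 𝕜) *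
          ((-1) ^ (i + j) / ((n + m + 1 - i - j : ℕ) : 𝕜)) *
          z ^ (n + m + 1 - i - j) * a ^ j * b ^ i)
      ((z - b) ^ m * (z - a) ^ n) z := by
  rw [sub_pow_mul_sub_pow_eq_sum]
  refine HasDerivAt.fun_sum (F := 𝕜) fun i hi => HasDerivAt.fun_sum (F := 𝕜) fun j hj => ?_
  have hi : i ≤ m := Nat.lt_succ_iff.mp (mem_range.mp hi)
  have hj : j ≤ n := Nat.lt_succ_iff.mp (mem_range.mp hj)
  have hexp : n + m + 1 - i - j = (m - i) + (n - j) + 1 := by omega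
  have hne : (((m - i) + (n - j) + 1 : ℕ) : 𝕜) ≠ 0 := Nat.cast_ne_zero.mpr (Nat.succ_ne_zero _)
  refine ((((hasDerivAt_pow _ z).const_mul _).mul_const (a ^ j)).mul_const (b ^ i)).congr_deriv ?_
  rw [hexp, Nat.add_sub_cancel]
  field_simp

theorem integral_pow_mul_sub_one_pow_ne_zero (m n : ℕ) :
    ∫ t in (0 : ℝ)..1, t ^ m * (t - 1) ^ n ≠ 0 := by
  have hbeta : 0 < ∫ t in (0 : ℝ)..1, t ^ m * (1 - t) ^ n := by
    refine intervalIntegral.intervalIntegral_pos_of_pos_on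
      ((by fun_prop : Continuous _).intervalIntegrable 0 1) (fun t ht => ?_) zero_lt_one
    exact mul_pos (pow_pos ht.1 m) (pow_pos (sub_pos.mpr ht.2) n)
  have hsign : ∫ t in (0 : ℝ)..1, t ^ m * (1 - t) ^ n
      = (-1) ^ n * ∫ t in (0 : ℝ)..1, t ^ m * (t - 1) ^ n := by
    rw [← intervalIntegral.integral_const_mul]
    congr 1 with t
    rw [← neg_sub t 1, neg_pow]
    ring
  intro h
  rw [hsign, h, mul_zero] at hbeta
  exact hbeta.false

theorem sub_eq_of_hasDerivAt_sub_pow_mul_sub_pow {F : ℂ → ℂ} {m n : ℕ} {a b : ℂ}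
    (hF : ∀ z, HasDerivAt F ((z - b) ^ m * (z - a) ^ n) z) :
    F a - F b = (a - b) ^ (m + n + 1) * ↑(∫ t in (0 : ℝ)..1, t ^ m * (t - 1) ^ n) := by
  have hftc := intervalIntegral.integral_unitInterval_deriv_eq_sub
    (f' := fun z => (z - b) ^ m * (z - a) ^ n) (z₀ := b) (z₁ := a - b)
    (by fun_prop) (fun t _ => hF _)
  have hpath : ∀ t : ℝ, (b + t • (a - b) - b) ^ m * (b + t • (a - b) - a) ^ n
      = (a - b) ^ (m + n) * ((t ^ m * (t - 1) ^ n : ℝ) : ℂ) := fun t => by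
    rw [Complex.real_smul, show b + t * (a - b) - b = t * (a - b) by ring,
      show b + t * (a - b) - a = (t - 1) * (a - b) by ring, mul_pow, mul_pow]
    push_cast
    ring
  rw [add_sub_cancel] at hftc
  rw [← hftc]
  simp only [hpath, intervalIntegral.integral_const_mul, intervalIntegral.integral_ofReal,
    smul_eq_mul]
  ring

theorem stmt_5_general (m n : ℕ) (a b c : ℂ) (hab : a ≠ b)
    (Q : ℂ → ℂ)
    (hQ : Q = fun z => ∑ i ∈ Finset.range (m + 1), ∑ j ∈ Finset.range (n + 1),
      (m.choose i : ℂ) * (n.choose j : ℂ) *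
        ((-1) ^ (i + j) / ((n + m + 1 - i - j : ℕ) : ℂ)) *
        z ^ (n + m + 1 - i - j) * a ^ j * b ^ i)
    (P : ℂ → ℂ) (hP : P = fun z => Q z + c) :
    P a ≠ P b := by
  have hQ' : ∀ z, HasDerivAt Q ((z - b) ^ m * (z - a) ^ n) z := fun z => by
    rw [hQ]
    exact hasDerivAt_sum_choose_pow_div m n a b z
  have hdiff : P a - P b ≠ 0 := by
    rw [hP, add_sub_add_right_eq_sub, sub_eq_of_hasDerivAt_sub_pow_mul_sub_pow hQ']
    exact mul_ne_zero (pow_ne_zero _ (sub_ne_zero.mpr hab))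
      (Complex.ofReal_ne_zero.mpr (integral_pow_mul_sub_one_pow_ne_zero m n))
  exact sub_ne_zero.mp hdiff

theorem stmt_5 (m n : ℕ) (hm : 0 < m) (hn : 0 < n) (a b c : ℂ) (hab : a ≠ b)
    (Q : ℂ → ℂ)
    (hQ : Q = fun z => ∑ i ∈ Finset.range (m + 1), ∑ j ∈ Finset.range (n + 1),
      (m.choose i : ℂ) * (n.choose j : ℂ) *
        ((-1) ^ (i + j) / ((n + m + 1 - i - j : ℕ) : ℂ)) *
        z ^ (n + m + 1 - i - j) * a ^ j * b ^ i)
    (P : ℂ → ℂ) (hP : P = fun z => Q z + c) :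
    P a ≠ P b :=
  stmt_5_general m n a b c hab Q hQ P hP
end

section
/- Let m, n be positive integers and a, b ∈ ℂ with a ≠ b, and let P(z) = Σ_{i=0}^{m} Σ_{j=0}^{n} C(m,i)·C(n,j)·((-1)^{i+j}/(n+m+1-i-j))·z^{n+m+1-i-j}·a^j·b^i + c. Then P(z) - P(b) = (z - b)^{m+1}·R(z) for a polynomial R with R(b) ≠ 0, and moreover R has no multiple zeros. -/
/-!
Expanding `(X - b)^m (X - a)^n` binomially shows `P' = (X - b)^m (X - a)^n`, so `F := P - P(b)`
vanishes at `b` with multiplicity exactly `m + 1`. A double root `z` of the cofactor `R` is a double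
root of `F`, hence a root of `F'`, so `z = b` (excluded by `R(b) ≠ 0`) or `z = a`. The latter is
impossible because integrating `P'` along the segment from `b` to `a` gives
`P(a) - P(b) = (-1)^n (a - b)^(m+n+1) B(m+1, n+1) ≠ 0`.
-/

open Polynomial

theorem derivative_sum_choose_mul_X_pow_add_C {K : Type*} [Field K] [CharZero K] (m n : ℕ)
    (a b c : K) :
    derivative ((∑ i ∈ Finset.range (m + 1), ∑ j ∈ Finset.range (n + 1),
      C ((m.choose i : K) * (n.choose j : K) *
        ((-1) ^ (i + j) / ((n + m + 1 - i - j : ℕ) : K)) * a ^ j * b ^ i) *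
        X ^ (n + m + 1 - i - j)) + C c) = (X - C b) ^ m * (X - C a) ^ n := by
  rw [sub_eq_neg_add, sub_eq_neg_add, (Commute.all _ _).add_pow, (Commute.all _ _).add_pow,
    Finset.sum_mul_sum, derivative_add, derivative_C, add_zero, derivative_sum]
  refine Finset.sum_congr rfl fun i hi => ?_
  rw [derivative_sum]
  refine Finset.sum_congr rfl fun j hj => ?_
  have hi : i ≤ m := Nat.le_of_lt_succ (Finset.mem_range.mp hi)
  have hj : j ≤ n := Nat.le_of_lt_succ (Finset.mem_range.mp hj)
  have hdeg : n + m + 1 - i - j = (m - i) + (n - j) + 1 := by omega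
  have hne : ((m - i + (n - j) + 1 : ℕ) : K) ≠ 0 := Nat.cast_ne_zero.mpr (Nat.succ_ne_zero _)
  rw [hdeg, derivative_C_mul_X_pow, Nat.add_sub_cancel, neg_pow, neg_pow, pow_add, pow_add]
  field_simp
  simp only [map_mul, map_pow, map_neg, map_one, map_natCast]
  ring

theorem integral_pow_mul_one_sub_pow_pos (m n : ℕ) :
    0 < ∫ s in (0 : ℝ)..1, s ^ m * (1 - s) ^ n := by
  refine intervalIntegral.intervalIntegral_pos_of_pos_on
    (Continuous.intervalIntegrable (by fun_prop) _ _) (fun s hs => ?_) zero_lt_one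
  have : 0 < 1 - s := sub_pos.mpr hs.2
  have := hs.1
  positivity

theorem eval_sub_eval_of_derivative_eq {P : ℂ[X]} {m n : ℕ} {a b : ℂ}
    (hP : derivative P = (X - C b) ^ m * (X - C a) ^ n) :
    P.eval a - P.eval b =
      (a - b) ^ (m + n + 1) * (-1) ^ n * ↑(∫ s in (0 : ℝ)..1, s ^ m * (1 - s) ^ n) := by
  have hpath : ∀ s : ℝ, HasDerivAt (fun s : ℝ => P.eval (b + s * (a - b)))
      ((a - b) ^ (m + n + 1) * (-1) ^ n * ↑(s ^ m * (1 - s) ^ n)) s := by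
    intro s
    have hline : HasDerivAt (fun z : ℂ => b + z * (a - b)) (a - b) s := by
      simpa using ((hasDerivAt_id (s : ℂ)).mul_const (a - b)).const_add b
    refine (((P.hasDerivAt _).comp (s : ℂ) hline).comp_ofReal).congr_deriv ?_
    simp only [hP, eval_mul, eval_pow, eval_sub, eval_X, eval_C, Complex.ofReal_mul,
      Complex.ofReal_pow, Complex.ofReal_sub, Complex.ofReal_one]
    rw [show b + s * (a - b) - b = s * (a - b) by ring,
      show b + s * (a - b) - a = -1 * ((1 - s) * (a - b)) by ring, mul_pow, mul_pow, mul_pow]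
    ring
  rw [← intervalIntegral.integral_ofReal, ← intervalIntegral.integral_const_mul,
    intervalIntegral.integral_eq_sub_of_hasDerivAt (fun s _ => hpath s)
      (Continuous.intervalIntegrable (by fun_prop) _ _)]
  simp

theorem eval_ne_eval_of_derivative_eq {P : ℂ[X]} {m n : ℕ} {a b : ℂ} (hab : a ≠ b)
    (hP : derivative P = (X - C b) ^ m * (X - C a) ^ n) :
    P.eval a ≠ P.eval b := by
  rw [← sub_ne_zero, eval_sub_eval_of_derivative_eq hP]
  refine mul_ne_zero (mul_ne_zero (pow_ne_zero _ (sub_ne_zero.mpr hab)) ?_) ?_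
  · exact pow_ne_zero _ (neg_ne_zero.mpr one_ne_zero)
  · exact Complex.ofReal_ne_zero.mpr (integral_pow_mul_one_sub_pow_pos m n).ne'

theorem rootMultiplicity_eq_succ_of_derivative_eq {K : Type*} [Field K] [CharZero K]
    {F Q : K[X]} {b : K} {m : ℕ} (hFb : F.IsRoot b)
    (hD : derivative F = (X - C b) ^ m * Q) (hQb : ¬ Q.IsRoot b) :
    F.rootMultiplicity b = m + 1 := by
  have hQ : Q ≠ 0 := fun h => hQb (by simp [h])
  have hD0 : (X - C b) ^ m * Q ≠ 0 := mul_ne_zero (pow_ne_zero _ (X_sub_C_ne_zero b)) hQ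
  have hF : F ≠ 0 := fun h => hD0 (by rw [← hD, h, derivative_zero])
  have hpos := (rootMultiplicity_pos hF).mpr hFb
  have h := derivative_rootMultiplicity_of_root hFb
  rw [hD, rootMultiplicity_mul hD0, rootMultiplicity_X_sub_C_pow,
    rootMultiplicity_eq_zero hQb] at h
  omega

theorem not_sq_dvd_of_derivative_eq {K : Type*} [Field K] [CharZero K]
    {F R : K[X]} {a b : K} {k m n : ℕ}
    (hF : F = (X - C b) ^ k * R) (hRb : R.eval b ≠ 0) (hFa : F.eval a ≠ 0)
    (hD : derivative F = (X - C b) ^ m * (X - C a) ^ n) (z : K) :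
    ¬ (X - C z) ^ 2 ∣ R := by
  intro hzR
  have hzF : (X - C z) ^ 2 ∣ F := hF ▸ dvd_mul_of_dvd_right hzR _
  have hzD : (X - C z) ∣ derivative F := by
    simpa using pow_sub_one_dvd_derivative_of_pow_dvd hzF
  rw [hD, dvd_iff_isRoot, IsRoot.def] at hzD
  simp only [eval_mul, eval_pow, eval_sub, eval_X, eval_C] at hzD
  rcases mul_eq_zero.mp hzD with hz | hz <;>
    obtain rfl := sub_eq_zero.mp (eq_zero_of_pow_eq_zero hz)
  · exact hRb (dvd_iff_isRoot.mp (dvd_trans (dvd_pow_self _ two_ne_zero) hzR))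
  · exact hFa (dvd_iff_isRoot.mp (dvd_trans (dvd_pow_self _ two_ne_zero) hzF))

theorem stmt_6_general (m n : ℕ) (a b c : ℂ) (hab : a ≠ b)
    (P : Polynomial ℂ)
    (hP : P = (∑ i ∈ Finset.range (m + 1), ∑ j ∈ Finset.range (n + 1),
      C ((m.choose i : ℂ) * (n.choose j : ℂ) *
        ((-1) ^ (i + j) / ((n + m + 1 - i - j : ℕ) : ℂ)) * a ^ j * b ^ i) *
        X ^ (n + m + 1 - i - j)) + C c) :
    ∃ R : Polynomial ℂ,
      P - C (P.eval b) = (X - C b) ^ (m + 1) * R ∧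
      R.eval b ≠ 0 ∧
      ∀ z : ℂ, ¬ (X - C z) ^ 2 ∣ R := by
  have hD : derivative P = (X - C b) ^ m * (X - C a) ^ n :=
    hP ▸ derivative_sum_choose_mul_X_pow_add_C m n a b c
  set F := P - C (P.eval b)
  have hFD : derivative F = (X - C b) ^ m * (X - C a) ^ n := by simp [F, hD]
  have hFa : F.eval a ≠ 0 := by
    simpa [F, sub_eq_zero] using eval_ne_eval_of_derivative_eq hab hD
  have hF0 : F ≠ 0 := fun h => hFa (by simp [h])
  have hmult : F.rootMultiplicity b = m + 1 :=
    rootMultiplicity_eq_succ_of_derivative_eq (by simp [F]) hFD (by simp [sub_eq_zero, hab.symm])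
  have hRb := eval_divByMonic_pow_rootMultiplicity_ne_zero b hF0
  have hfac := (pow_mul_divByMonic_rootMultiplicity_eq F b).symm
  rw [hmult] at hRb hfac
  exact ⟨_, hfac, hRb, not_sq_dvd_of_derivative_eq hfac hRb hFa hFD⟩

theorem stmt_6 (m n : ℕ) (hm : 0 < m) (hn : 0 < n) (a b c : ℂ) (hab : a ≠ b)
    (P : Polynomial ℂ)
    (hP : P = (∑ i ∈ Finset.range (m + 1), ∑ j ∈ Finset.range (n + 1),
      C ((m.choose i : ℂ) * (n.choose j : ℂ) *
        ((-1) ^ (i + j) / ((n + m + 1 - i - j : ℕ) : ℂ)) * a ^ j * b ^ i) *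
        X ^ (n + m + 1 - i - j)) + C c) :
    ∃ R : Polynomial ℂ,
      P - C (P.eval b) = (X - C b) ^ (m + 1) * R ∧
      R.eval b ≠ 0 ∧
      ∀ z : ℂ, ¬ (X - C z) ^ 2 ∣ R :=
  stmt_6_general m n a b c hab P hP
end

section
/- Let n ≥ 4 and let P(z) = ((n-1)(n-2)/2)·z^n - n(n-2)·z^{n-1} + (n(n-1)/2)·z^{n-2} - c. Then P(z) - P(1) = (z-1)³·R₁(z) where R₁ is a polynomial with R₁(1) ≠ 0 and R₁ has no multiple zeros, and P(z) - P(0) = z^{n-2}·R₂(z) where R₂(0) ≠ 0 and R₂ has no multiple zeros. -/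
/-!
Subtracting the constant term does not change the derivative
`P' = (n(n-1)(n-2)/2) z^{n-3} (z-1)²`, so the only critical points of `P` are `0` and `1`.
At `1` the derivative vanishes to order exactly two, so `P - P(1)` vanishes there to order exactly
three. A double zero of the cofactor `R₁` would be a further critical point of `P - P(1)` at which
it vanishes, and the only candidate `0` is excluded because `P(0) - P(1) = -1`. At `0` the cofactor
`R₂` is an explicit quadratic with discriminant `-n(n-2) ≠ 0`.
-/

open Polynomial

namespace Polynomial

variable {R : Type*} [CommRing R]

theorem isRoot_and_isRoot_derivative_of_sq_dvd {p : R[X]} {z : R} (h : (X - C z) ^ 2 ∣ p) :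
    p.IsRoot z ∧ (derivative p).IsRoot z :=
  ⟨dvd_iff_isRoot.1 ((dvd_pow_self _ two_ne_zero).trans h),
    dvd_iff_isRoot.1 (by simpa using pow_sub_one_dvd_derivative_of_pow_dvd h)⟩

theorem not_sq_dvd_quadratic_of_discrim_ne_zero {a b c : R} (h : discrim a b c ≠ 0) (z : R) :
    ¬ (X - C z) ^ 2 ∣ C a * X ^ 2 + C b * X + C c := by
  intro hz
  obtain ⟨hroot, hcrit⟩ := isRoot_and_isRoot_derivative_of_sq_dvd hz
  simp only [IsRoot, eval_add, eval_mul, eval_C, eval_pow, eval_X, derivative_add, derivative_mul,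
    derivative_C, derivative_X_pow, derivative_X, zero_mul, zero_add, mul_one, add_zero,
    Nat.cast_ofNat, Nat.reduceSub, pow_one] at hroot hcrit
  exact h (by rw [discrim]; linear_combination (2 * a * z + b) * hcrit - 4 * a * hroot)

theorem not_sq_dvd_of_eq_X_sub_C_pow_mul {p q : R[X]} {a : R} {k : ℕ}
    (hp : p = (X - C a) ^ k * q) (hqa : q.eval a ≠ 0)
    (hcrit : ∀ z ≠ a, p.IsRoot z → ¬ (derivative p).IsRoot z) (z : R) :
    ¬ (X - C z) ^ 2 ∣ q := by
  intro hz
  by_cases hza : z = a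
  · subst hza
    exact hqa (isRoot_and_isRoot_derivative_of_sq_dvd hz).1
  · obtain ⟨hroot, hroot'⟩ := isRoot_and_isRoot_derivative_of_sq_dvd (hp ▸ hz.mul_left _)
    exact hcrit z hza hroot hroot'

theorem exists_eq_X_sub_C_pow_succ_mul_of_derivative_eq [IsDomain R] [CharZero R]
    {p g : R[X]} {a : R} {k : ℕ}
    (hroot : p.IsRoot a) (hd : derivative p = (X - C a) ^ k * g) (hga : g.eval a ≠ 0) :
    ∃ q, p = (X - C a) ^ (k + 1) * q ∧ q.eval a ≠ 0 := by
  have hg0 : g ≠ 0 := by rintro rfl; simp at hga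
  have hp0 : p ≠ 0 := by
    rintro rfl
    simp [hg0, X_sub_C_ne_zero] at hd
  have hmult : p.rootMultiplicity a = k + 1 := by
    have hd_mult := derivative_rootMultiplicity_of_root hroot
    rw [hd, mul_comm, rootMultiplicity_mul_X_sub_C_pow hg0, rootMultiplicity_eq_zero hga] at hd_mult
    have := (rootMultiplicity_pos hp0).2 hroot
    omega
  refine ⟨p /ₘ (X - C a) ^ (k + 1), ?_, ?_⟩
  · rw [← hmult, pow_mul_divByMonic_rootMultiplicity_eq]
  · rw [← hmult]
    exact eval_divByMonic_pow_rootMultiplicity_ne_zero a hp0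

end Polynomial

variable {K : Type*} [Field K] [CharZero K]

noncomputable def frankReinders (n : ℕ) (c : K) : K[X] :=
  C (((n : K) - 1) * ((n : K) - 2) / 2) * X ^ n - C ((n : K) * ((n : K) - 2)) * X ^ (n - 1) +
    C ((n : K) * ((n : K) - 1) / 2) * X ^ (n - 2) - C c

noncomputable def frankReindersCofactor (n : ℕ) : K[X] :=
  C (((n : K) - 1) * ((n : K) - 2) / 2) * X ^ 2 + C (-((n : K) * ((n : K) - 2))) * X +
    C ((n : K) * ((n : K) - 1) / 2)

namespace FrankReinders

variable {n : ℕ} (c : K)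

theorem natCast_ne_zero_and_sub_ne_zero (hn : 3 ≤ n) :
    (n : K) ≠ 0 ∧ (n : K) - 1 ≠ 0 ∧ (n : K) - 2 ≠ 0 :=
  ⟨by exact_mod_cast (by omega : n ≠ 0), sub_ne_zero.2 (by exact_mod_cast (by omega : n ≠ 1)),
    sub_ne_zero.2 (by exact_mod_cast (by omega : n ≠ 2))⟩

theorem eval_one : (frankReinders n c).eval 1 = 1 - c := by
  simp only [frankReinders, eval_sub, eval_add, eval_mul, eval_C, eval_pow, eval_X, one_pow]
  ring

omit [CharZero K] in
theorem eval_zero (hn : 3 ≤ n) : (frankReinders n c).eval 0 = -c := by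
  obtain ⟨k, rfl⟩ := Nat.exists_eq_add_of_le' hn
  simp [frankReinders]

theorem derivative_eq (hn : 3 ≤ n) :
    derivative (frankReinders n c) =
      (X - C 1) ^ 2 * (C ((n : K) * (n - 1) * (n - 2) / 2) * X ^ (n - 3)) := by
  obtain ⟨k, rfl⟩ := Nat.exists_eq_add_of_le' hn
  refine Polynomial.funext fun z => ?_
  simp [frankReinders, show k + 3 - 1 = k + 2 by omega, show k + 3 - 2 = k + 1 by omega]
  ring

theorem eq_zero_of_isRoot_derivative (hn : 3 ≤ n) {z : K} (hz : z ≠ 1)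
    (h : (derivative (frankReinders n c)).IsRoot z) : z = 0 := by
  obtain ⟨h0, h1, h2⟩ := natCast_ne_zero_and_sub_ne_zero (K := K) hn
  simp only [derivative_eq c hn, map_one, IsRoot.def, eval_mul, eval_pow, eval_sub, eval_X,
    Polynomial.eval_one, eval_C, mul_eq_zero, ne_eq, OfNat.ofNat_ne_zero, not_false_eq_true,
    pow_eq_zero_iff, sub_eq_zero, hz, div_eq_zero_iff, h0, h1, or_self, h2, pow_eq_zero_iff',
    false_or] at h
  exact h.1

theorem sub_eval_zero (hn : 3 ≤ n) :
    frankReinders n c - C ((frankReinders n c).eval 0) = X ^ (n - 2) * frankReindersCofactor n := by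
  obtain ⟨k, rfl⟩ := Nat.exists_eq_add_of_le' hn
  rw [eval_zero c hn]
  refine Polynomial.funext fun z => ?_
  simp [frankReinders, frankReindersCofactor, show k + 3 - 1 = k + 2 by omega,
    show k + 3 - 2 = k + 1 by omega]
  ring

theorem cofactor_eval_zero_ne_zero (hn : 3 ≤ n) :
    (frankReindersCofactor n : K[X]).eval 0 ≠ 0 := by
  obtain ⟨h0, h1, -⟩ := natCast_ne_zero_and_sub_ne_zero (K := K) hn
  simp [frankReindersCofactor, h0, h1]

theorem not_sq_dvd_cofactor (hn : 3 ≤ n) (z : K) :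
    ¬ (X - C z) ^ 2 ∣ frankReindersCofactor n := by
  obtain ⟨h0, -, h2⟩ := natCast_ne_zero_and_sub_ne_zero (K := K) hn
  refine not_sq_dvd_quadratic_of_discrim_ne_zero ?_ z
  have hdiscrim : discrim (((n : K) - 1) * ((n : K) - 2) / 2) (-((n : K) * ((n : K) - 2)))
      ((n : K) * ((n : K) - 1) / 2) = -((n : K) * (n - 2)) := by
    rw [discrim]; ring
  rw [hdiscrim]
  exact neg_ne_zero.2 (mul_ne_zero h0 h2)

theorem exists_sub_eval_one_eq (hn : 3 ≤ n) :
    ∃ R : K[X], frankReinders n c - C ((frankReinders n c).eval 1) = (X - C 1) ^ 3 * R ∧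
      R.eval 1 ≠ 0 ∧ ∀ z : K, ¬ (X - C z) ^ 2 ∣ R := by
  obtain ⟨h0, h1, h2⟩ := natCast_ne_zero_and_sub_ne_zero (K := K) hn
  have hd : derivative (frankReinders n c - C ((frankReinders n c).eval 1)) =
      (X - C 1) ^ 2 * (C ((n : K) * (n - 1) * (n - 2) / 2) * X ^ (n - 3)) := by
    rw [derivative_sub, derivative_C, sub_zero, derivative_eq c hn]
  obtain ⟨R, hR, hR1⟩ :=
    exists_eq_X_sub_C_pow_succ_mul_of_derivative_eq (by simp) hd (by simp [h0, h1, h2])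
  refine ⟨R, hR, hR1, not_sq_dvd_of_eq_X_sub_C_pow_mul hR hR1 fun z hz hroot hcrit => ?_⟩
  rw [derivative_sub, derivative_C, sub_zero] at hcrit
  obtain rfl := eq_zero_of_isRoot_derivative c hn hz hcrit
  rw [IsRoot, eval_sub, eval_C, eval_zero c hn, eval_one] at hroot
  exact one_ne_zero (by linear_combination -hroot : (1 : K) = 0)

end FrankReinders

open FrankReinders in
theorem stmt_11 (n : ℕ) (hn : 4 ≤ n) (c : ℂ)
    (P : Polynomial ℂ)
    (hP : P = C (((n : ℂ) - 1) * ((n : ℂ) - 2) / 2) * X ^ n -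
      C ((n : ℂ) * ((n : ℂ) - 2)) * X ^ (n - 1) +
      C ((n : ℂ) * ((n : ℂ) - 1) / 2) * X ^ (n - 2) - C c) :
    (∃ R₁ : Polynomial ℂ,
      P - C (P.eval 1) = (X - C 1) ^ 3 * R₁ ∧ R₁.eval 1 ≠ 0 ∧
      ∀ z : ℂ, ¬ (X - C z) ^ 2 ∣ R₁) ∧
    (∃ R₂ : Polynomial ℂ,
      P - C (P.eval 0) = X ^ (n - 2) * R₂ ∧ R₂.eval 0 ≠ 0 ∧
      ∀ z : ℂ, ¬ (X - C z) ^ 2 ∣ R₂) := by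
  have hn3 : 3 ≤ n := by omega
  obtain rfl : P = frankReinders n c := hP
  exact ⟨exists_sub_eval_one_eq c hn3, frankReindersCofactor n, sub_eval_zero c hn3,
    cofactor_eval_zero_ne_zero hn3, not_sq_dvd_cofactor hn3⟩
end

section
/- Let m, n be positive integers, b ∈ ℂ with b ≠ 0, and P(z) = Σ_{i=0}^{m} C(m,i)·((-1)^i/(n+m+1-i))·z^{n+m+1-i}·b^i + 1. Then for any complex number d with d ∉ {P(0), P(b)}, the polynomial P(z) - d has exactly m + n + 1 distinct zeros (i.e., all its zeros are simple). -/
open Polynomial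

/-!
Since `P' = X ^ n * (X - b) ^ m`, a repeated root of `P - d` would be a root of `P'`, hence `0`
or `b`, which `d ∉ {P(0), P(b)}` rules out. So `P - d` is separable; over `ℂ` it splits, and its
degree is `deg P' + 1 = n + m + 1`.
-/

namespace Polynomial

noncomputable def antiderivXPowMulXSubCPow {K : Type*} [Field K] (m n : ℕ) (b : K) : K[X] :=
  ∑ i ∈ Finset.range (m + 1),
    C ((m.choose i : K) * ((-1) ^ i / ((n + m + 1 - i : ℕ) : K)) * b ^ i) * X ^ (n + m + 1 - i)

variable {K : Type*} [Field K]

theorem derivative_antiderivXPowMulXSubCPow [CharZero K] (m n : ℕ) (b : K) :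
    derivative (antiderivXPowMulXSubCPow m n b) = X ^ n * (X - C b) ^ m := by
  rw [antiderivXPowMulXSubCPow, derivative_sum, sub_eq_neg_add, ← C_neg, add_pow,
    Finset.mul_sum]
  refine Finset.sum_congr rfl fun i hi => ?_
  have him : i ≤ m := Nat.lt_succ_iff.mp (Finset.mem_range.mp hi)
  have hcast : ((n + m + 1 - i : ℕ) : K) ≠ 0 := Nat.cast_ne_zero.mpr (by omega)
  have hcoeff : (m.choose i : K) * ((-1) ^ i / ((n + m + 1 - i : ℕ) : K)) * b ^ i *
      ((n + m + 1 - i : ℕ) : K) = (-b) ^ i * m.choose i := by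
    field_simp
    ring
  rw [derivative_C_mul_X_pow, hcoeff, show n + m + 1 - i - 1 = n + (m - i) by omega, pow_add,
    map_mul, map_pow, map_natCast]
  ring

theorem natDegree_eq_of_derivative_eq_X_pow_mul_X_sub_C_pow [CharZero K] {p : K[X]} {m n : ℕ}
    {b : K} (hp : derivative p = X ^ n * (X - C b) ^ m) : p.natDegree = n + m + 1 := by
  have hX : (X ^ n : K[X]) ≠ 0 := pow_ne_zero _ X_ne_zero
  have hXb : (X - C b) ^ m ≠ 0 := pow_ne_zero _ (X_sub_C_ne_zero b)
  have hp0 : p.natDegree ≠ 0 := fun h => mul_ne_zero hX hXb (hp ▸ derivative_of_natDegree_zero h)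
  have hdeg := natDegree_derivative p
  rw [hp, natDegree_mul hX hXb,
    natDegree_X_pow, natDegree_pow, natDegree_X_sub_C, mul_one] at hdeg
  omega

theorem card_roots_sub_C_of_forall_isRoot_derivative [IsAlgClosed K] [DecidableEq K] {p : K[X]}
    {d : K} (hd : ∀ a, (derivative p).IsRoot a → p.eval a ≠ d) :
    (p - C d).roots.toFinset.card = p.natDegree := by
  have hsep : (p - C d).Separable := by
    rw [Separable, isCoprime_iff_aeval_ne_zero_of_isAlgClosed (k := K) K]
    intro a
    rw [← not_and_or]
    rintro ⟨hroot, hroot'⟩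
    simp only [coe_aeval_eq_eval, derivative_sub, derivative_C, sub_zero, eval_sub, eval_C,
      sub_eq_zero] at hroot hroot'
    exact hd a hroot' hroot
  rw [Multiset.toFinset_card_of_nodup (nodup_roots hsep),
    splits_iff_card_roots.mp (IsAlgClosed.splits _), natDegree_sub_C]

end Polynomial

theorem stmt_18_general (m n : ℕ) (b : ℂ)
    (P : Polynomial ℂ)
    (hP : P = (∑ i ∈ Finset.range (m + 1),
      C ((m.choose i : ℂ) * ((-1) ^ i / ((n + m + 1 - i : ℕ) : ℂ)) * b ^ i) *
        X ^ (n + m + 1 - i)) + 1)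
    (d : ℂ) (hd0 : d ≠ P.eval 0) (hdb : d ≠ P.eval b) :
    (P - C d).roots.toFinset.card = m + n + 1 := by
  have hP' : derivative P = X ^ n * (X - C b) ^ m := by
    rw [hP, derivative_add, derivative_one, add_zero]
    exact derivative_antiderivXPowMulXSubCPow m n b
  rw [card_roots_sub_C_of_forall_isRoot_derivative,
    natDegree_eq_of_derivative_eq_X_pow_mul_X_sub_C_pow hP', add_comm n]
  intro a ha
  rw [hP', IsRoot, eval_mul, eval_pow, eval_pow, eval_sub, eval_X, eval_C, mul_eq_zero] at ha
  obtain rfl | rfl : a = 0 ∨ a = b :=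
    ha.imp eq_zero_of_pow_eq_zero fun h => sub_eq_zero.mp (eq_zero_of_pow_eq_zero h)
  · exact hd0.symm
  · exact hdb.symm

theorem stmt_18 (m n : ℕ) (hm : 0 < m) (hn : 0 < n) (b : ℂ) (hb : b ≠ 0)
    (P : Polynomial ℂ)
    (hP : P = (∑ i ∈ Finset.range (m + 1),
      C ((m.choose i : ℂ) * ((-1) ^ i / ((n + m + 1 - i : ℕ) : ℂ)) * b ^ i) *
        X ^ (n + m + 1 - i)) + 1)
    (d : ℂ) (hd0 : d ≠ P.eval 0) (hdb : d ≠ P.eval b) :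
    (P - C d).roots.toFinset.card = m + n + 1 :=
  stmt_18_general m n b P hP d hd0 hdb
end

section
/- Let n ≥ 3, A ∈ ℂ with A ≠ 0, A ≠ 1, λ = 4(1 - 1/(n-1)²), and ψ(t) = λ(t^{n-1} - A)² - 4(t^{n-2} - A)(t^n - A). Then ψ is a polynomial of degree exactly 2n - 2 with exactly 2n - 2 distinct complex roots. -/
/-!
Since `λ - 4 = -4/(n-1)²`, `ψ` is `-4/(n-1)²` times
`φ = (t^(n-1) - A)² - A (n-1)² t^(n-2) (t-1)²` (`normalizedPsi (n - 2) A`), whose leading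
term `t^(2n-2)` comes from the square.
A common root `t` of `φ` and `φ'` is nonzero, and eliminating `t^(n-1)` between `φ(t) = 0` and
`φ'(t) = 0` gives `A² (n-1)² n (n-2) (t-1)⁴ = 0`; so `t = 1`, but `φ(1) = (1 - A)² ≠ 0`.
Hence all roots of `φ` are simple, and over `ℂ` there are as many of them as its degree.
-/

open Polynomial

theorem card_roots_toFinset_eq_natDegree_of_isRoot_derivative
    {K : Type*} [Field K] [IsAlgClosed K] [DecidableEq K] {p : K[X]} (hp : p ≠ 0)
    (h : ∀ t, p.IsRoot t → ¬ (derivative p).IsRoot t) :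
    p.roots.toFinset.card = p.natDegree := by
  have hnodup : p.roots.Nodup := by
    refine Multiset.nodup_iff_count_le_one.mpr fun t ↦ ?_
    rw [count_roots]
    by_contra! hmult
    obtain ⟨hroot, hroot'⟩ := (one_lt_rootMultiplicity_iff_isRoot hp).mp hmult
    exact h t hroot hroot'
  rw [Multiset.toFinset_card_of_nodup hnodup, IsAlgClosed.card_roots_eq_natDegree]

noncomputable def normalizedPsi {R : Type*} [CommRing R] (j : ℕ) (A : R) : R[X] :=
  (X ^ (j + 1) - C A) ^ 2 - C (A * (j + 1) ^ 2) * X ^ j * (X - 1) ^ 2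

theorem psi_eq_C_mul_normalizedPsi {K : Type*} [Field K] [CharZero K] (j : ℕ) (A : K) :
    C (4 * (1 - 1 / ((j : K) + 1) ^ 2)) * (X ^ (j + 1) - C A) ^ 2
        - 4 * (X ^ j - C A) * (X ^ (j + 2) - C A)
      = C (-4 / ((j : K) + 1) ^ 2) * normalizedPsi j A := by
  have hm : (j : K) + 1 ≠ 0 := by exact_mod_cast j.succ_ne_zero
  have hlam : 4 * (1 - 1 / ((j : K) + 1) ^ 2) = 4 + -4 / ((j : K) + 1) ^ 2 := by ring
  have hcancel : C (-4 / ((j : K) + 1) ^ 2) * C (A * (j + 1) ^ 2) = -4 * C A := by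
    rw [← map_mul, show -4 / ((j : K) + 1) ^ 2 * (A * (j + 1) ^ 2) = -4 * A by field_simp,
      map_mul, map_neg, map_ofNat]
  rw [normalizedPsi, hlam, map_add, map_ofNat]
  linear_combination (X ^ j * (X - 1) ^ 2) * hcancel

theorem natDegree_normalizedPsi {R : Type*} [CommRing R] [Nontrivial R] {j : ℕ} (hj : 1 ≤ j)
    (A : R) : (normalizedPsi j A).natDegree = 2 * (j + 1) := by
  have hlead : ((X ^ (j + 1) - C A) ^ 2 : R[X]).natDegree = 2 * (j + 1) := by
    rw [(monic_X_pow_sub_C A j.succ_ne_zero).natDegree_pow, natDegree_X_pow_sub_C]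
  have hlow : (C (A * (j + 1) ^ 2) * X ^ j * (X - 1) ^ 2 : R[X]).natDegree < 2 * (j + 1) := by
    calc _ ≤ j + 2 := by compute_degree
      _ < 2 * (j + 1) := by omega
  rw [normalizedPsi, natDegree_sub_eq_left_of_natDegree_lt (hlead ▸ hlow), hlead]

theorem derivative_normalizedPsi {R : Type*} [CommRing R] (k : ℕ) (A : R) :
    derivative (normalizedPsi (k + 1) A) = ((k : R[X]) + 2) * X ^ k *
      (2 * X * (X ^ (k + 2) - C A) -
        C A * ((k : R[X]) + 2) * (X - 1) * (((k : R[X]) + 3) * X - ((k : R[X]) + 1))) := by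
  simp only [normalizedPsi, derivative_sub, derivative_mul, derivative_sq, derivative_X_pow,
    derivative_C, derivative_X, derivative_one, derivative_natCast, map_mul, map_ofNat,
    map_pow, map_add, map_natCast, map_one, Nat.cast_add, Nat.cast_one, Nat.add_sub_cancel]
  ring

theorem not_isRoot_derivative_normalizedPsi {K : Type*} [Field K] [CharZero K] {j : ℕ} (hj : 1 ≤ j)
    {A : K} (hA0 : A ≠ 0) (hA1 : A ≠ 1) {t : K} (ht : (normalizedPsi j A).IsRoot t) :
    ¬ (derivative (normalizedPsi j A)).IsRoot t := by
  obtain ⟨k, rfl⟩ := Nat.exists_eq_add_of_le' hj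
  intro ht'
  rw [derivative_normalizedPsi] at ht'
  simp only [normalizedPsi, IsRoot.def, eval_sub, eval_mul, eval_add, eval_pow, eval_X, eval_C,
    eval_one, eval_natCast, eval_ofNat] at ht ht'
  push_cast at ht
  have hm : (k : K) + 2 ≠ 0 := by exact_mod_cast (k + 1).succ_ne_zero
  have ht0 : t ≠ 0 := by
    rintro rfl
    apply hA0
    simpa using ht
  have hcrit : 2 * t * (t ^ (k + 2) - A) = A * (k + 2) * (t - 1) * ((k + 3) * t - (k + 1)) := by
    have := (mul_eq_zero.mp ht').resolve_left (mul_ne_zero hm (pow_ne_zero k ht0))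
    linear_combination this
  -- eliminating `t ^ (k + 2)` between `φ(t) = 0` and `φ'(t) = 0`
  have key : A ^ 2 * ((k : K) + 2) ^ 2 * (((k : K) + 1) * (k + 3)) * (t - 1) ^ 4 = 0 := by
    linear_combination (-(4 * t ^ 2)) * ht +
      (2 * t * (t ^ (k + 2) - A) + A * (k + 2) * (t - 1) * ((k + 3) * t - (k + 1))
        - 2 * A * (k + 2) ^ 2 * (t - 1) ^ 2) * hcrit
  have hk : ((k : K) + 1) * (k + 3) ≠ 0 :=
    mul_ne_zero (by exact_mod_cast k.succ_ne_zero) (by exact_mod_cast (k + 2).succ_ne_zero)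
  have ht1 : t = 1 := by
    simpa [sub_eq_zero, hA0, hm, hk] using key
  subst ht1
  have : (1 - A) ^ 2 = 0 := by linear_combination ht
  exact hA1 (sub_eq_zero.mp (pow_eq_zero_iff two_ne_zero |>.mp this)).symm

theorem card_roots_toFinset_normalizedPsi {K : Type*} [Field K] [CharZero K] [IsAlgClosed K]
    [DecidableEq K] {j : ℕ} (hj : 1 ≤ j) {A : K} (hA0 : A ≠ 0) (hA1 : A ≠ 1) :
    (normalizedPsi j A).roots.toFinset.card = 2 * (j + 1) := by
  have hne : normalizedPsi j A ≠ 0 :=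
    ne_zero_of_natDegree_gt (n := 0) (by rw [natDegree_normalizedPsi hj]; omega)
  rw [card_roots_toFinset_eq_natDegree_of_isRoot_derivative hne
    fun _ ↦ not_isRoot_derivative_normalizedPsi hj hA0 hA1, natDegree_normalizedPsi hj]

theorem stmt_19 (n : ℕ) (hn : 3 ≤ n) (A : ℂ) (hA0 : A ≠ 0) (hA1 : A ≠ 1)
    (lam : ℂ) (hlam : lam = 4 * (1 - 1 / ((n : ℂ) - 1) ^ 2))
    (ψ : Polynomial ℂ)
    (hψ : ψ = C lam * (X ^ (n - 1) - C A) ^ 2 - 4 * (X ^ (n - 2) - C A) * (X ^ n - C A)) :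
    ψ.natDegree = 2 * n - 2 ∧ ψ.roots.toFinset.card = 2 * n - 2 := by
  obtain ⟨j, rfl⟩ : ∃ j, n = j + 2 := ⟨n - 2, by omega⟩
  have hj : 1 ≤ j := by omega
  have hc : -4 / ((j : ℂ) + 1) ^ 2 ≠ 0 :=
    div_ne_zero (by norm_num) (pow_ne_zero 2 (by exact_mod_cast j.succ_ne_zero))
  have hψ' : ψ = C (-4 / ((j : ℂ) + 1) ^ 2) * normalizedPsi j A := by
    rw [hψ, hlam, show j + 2 - 1 = j + 1 from rfl, Nat.add_sub_cancel,
      show ((j + 2 : ℕ) : ℂ) - 1 = j + 1 by push_cast; ring, psi_eq_C_mul_normalizedPsi]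
  rw [hψ', natDegree_C_mul hc, roots_C_mul _ hc, natDegree_normalizedPsi hj,
    card_roots_toFinset_normalizedPsi hj hA0 hA1]
  omega
end
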